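/- Suppose the formal series g_ε = Σ g_n εⁿ solves the conservative invariance equation order by order: g_n(θ+ω) − 2g_n(θ) + g_n(θ−ω) = R_n(θ), where Σ R_n εⁿ is the formal expansion of ε∇V(θk + g_ε(θ)). Then for each n ≥ 1, the average of R_n in the direction k vanishes: ∫₀^{2π} k·R_n(θ) dθ = 0, provided g_0, …, g_{n−1} are trigonometric polynomials and ω is Diophantine. Equivalently, solvability of the order-n equation only requires adjusting the k⊥-average of R_n. -/

import Mathlib

open scoped BigOperators

/-- Automatic solvability in the `k` direction for the conservative Lindstedt
scheme: if the formal series `g_ε = Σ g_n εⁿ` of trigonometric polynomials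
solves order by order `g_n(θ+ω) − 2g_n(θ) + g_n(θ−ω) = R_n(θ)`, where
`R_n` is the εⁿ-coefficient of the expansion of `ε∇V(θk + g_ε(θ))`
(realized via the n-th Taylor coefficient at ε = 0 of the truncated series,
which determines the formal coefficient), `V` is a trigonometric polynomial
and `ω` is Diophantine, then `∫₀^{2π} k·R_n(θ) dθ = 0` for all `n ≥ 1`. -/
theorem conservative_k_average_vanishes
    (ν ℓ₀ : ℝ) (hν : 0 < ν) (hℓ₀ : 0 < ℓ₀) (ω : ℝ)
    (hdio : ∀ m : ℤ, m ≠ 0 → ∀ n : ℤ,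
      ν * |(m : ℝ)| ^ (-ℓ₀) ≤ |(m : ℝ) * ω - 2 * Real.pi * (n : ℝ)|)
    (S : Finset (ℤ × ℤ)) (a : ℤ × ℤ → ℂ)
    (V : EuclideanSpace ℝ (Fin 2) → ℝ)
    (hV : ∀ x : EuclideanSpace ℝ (Fin 2),
      V x = (∑ ℓ ∈ S, a ℓ * Complex.exp (Complex.I * ((ℓ.1 : ℂ) * (x 0 : ℂ)
        + (ℓ.2 : ℂ) * (x 1 : ℂ)))).re)
    (k : EuclideanSpace ℝ (Fin 2)) (hkint : ∀ i, ∃ z : ℤ, k i = z) (hk : k ≠ 0)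
    (g R : ℕ → ℝ → EuclideanSpace ℝ (Fin 2))
    (hgtrig : ∀ n, ∃ (N : ℕ) (c : ℤ → Fin 2 → ℂ), ∀ (θ : ℝ) (i : Fin 2),
      (g n θ i : ℂ) = ∑ ℓ ∈ Finset.Icc (-(N:ℤ)) N, c ℓ i * Complex.exp (Complex.I * ℓ * θ))
    (hR : ∀ (n : ℕ) (θ : ℝ),
      R n θ = (1 / (n.factorial : ℝ)) •
        iteratedDeriv n (fun ε : ℝ =>
          ε • gradient V (θ • k + ∑ m ∈ Finset.range (n + 1), ε ^ m • g m θ)) 0)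
    (hsolve : ∀ (n : ℕ) (θ : ℝ),
      g n (θ + ω) - (2:ℝ) • g n θ + g n (θ - ω) = R n θ) :
    ∀ n : ℕ, 1 ≤ n →
      (∫ θ in (0:ℝ)..(2 * Real.pi), (inner ℝ k (R n θ) : ℝ)) = 0 := by
  intro n hn
  obtain ⟨N, c, hc⟩ := hgtrig n
  set f : ℝ → ℝ := fun θ => inner ℝ k (g n θ) with hf
  have hper : Function.Periodic f (2 * Real.pi) := by
    intro θ
    have hg : g n (θ + 2 * Real.pi) = g n θ := by
      ext i
      have h1 := hc (θ + 2 * Real.pi) i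
      have h2 := hc θ i
      have : ((g n (θ + 2 * Real.pi) i : ℝ) : ℂ) = ((g n θ i : ℝ) : ℂ) := by
        rw [h1, h2]
        refine Finset.sum_congr rfl fun ℓ _ => ?_
        congr 1
        have : Complex.I * ℓ * ((θ : ℂ) + 2 * Real.pi)
            = Complex.I * ℓ * θ + (ℓ : ℂ) * (2 * Real.pi * Complex.I) := by ring
        rw [Complex.ofReal_add, Complex.ofReal_mul, Complex.ofReal_ofNat, this,
          Complex.exp_add, Complex.exp_int_mul_two_pi_mul_I, mul_one]
      exact_mod_cast this
    simp only [hf, hg]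
  have hconti : ∀ i : Fin 2, Continuous (fun θ => g n θ i) := by
    intro i
    have : (fun θ => g n θ i) = fun θ : ℝ =>
        (∑ ℓ ∈ Finset.Icc (-(N:ℤ)) N, c ℓ i * Complex.exp (Complex.I * ℓ * (θ:ℂ))).re := by
      funext θ
      rw [← hc θ i, Complex.ofReal_re]
    rw [this]
    refine Complex.continuous_re.comp ?_
    refine continuous_finset_sum _ fun ℓ _ => Continuous.mul continuous_const ?_
    exact Complex.continuous_exp.comp (by continuity)
  have hfc : Continuous f := by
    have : f = fun θ => ∑ i : Fin 2, k i * g n θ i := by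
      funext θ
      simp [hf, PiLp.inner_apply, RCLike.inner_apply, mul_comm]
    rw [this]
    exact continuous_finset_sum _ fun i _ => (continuous_const.mul (hconti i))
  have key : ∀ θ : ℝ, (inner ℝ k (R n θ) : ℝ) = f (θ + ω) - 2 * f θ + f (θ - ω) := by
    intro θ
    rw [← hsolve n θ]
    simp only [hf, inner_add_right, inner_sub_right, real_inner_smul_right]
  have hint : ∀ a b : ℝ, IntervalIntegrable f MeasureTheory.volume a b :=
    fun a b => hfc.intervalIntegrable a b
  have h1 : (∫ θ in (0:ℝ)..(2 * Real.pi), f (θ + ω)) = ∫ θ in (0:ℝ)..(2 * Real.pi), f θ := by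
    rw [intervalIntegral.integral_comp_add_right]
    have := hper.intervalIntegral_add_eq ω 0
    simpa [add_comm, zero_add] using this
  have h3 : (∫ θ in (0:ℝ)..(2 * Real.pi), f (θ - ω)) = ∫ θ in (0:ℝ)..(2 * Real.pi), f θ := by
    rw [intervalIntegral.integral_comp_sub_right]
    have := hper.intervalIntegral_add_eq (-ω) 0
    simpa [add_comm, zero_add, sub_eq_add_neg] using this
  calc (∫ θ in (0:ℝ)..(2 * Real.pi), (inner ℝ k (R n θ) : ℝ))
      = ∫ θ in (0:ℝ)..(2 * Real.pi), (f (θ + ω) - 2 * f θ + f (θ - ω)) := by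
        simp_rw [key]
    _ = (∫ θ in (0:ℝ)..(2 * Real.pi), f (θ + ω)) - (∫ θ in (0:ℝ)..(2 * Real.pi), 2 * f θ)
        + (∫ θ in (0:ℝ)..(2 * Real.pi), f (θ - ω)) := by
        rw [intervalIntegral.integral_add, intervalIntegral.integral_sub]
        · exact (hfc.comp (continuous_id.add continuous_const)).intervalIntegrable _ _
        · exact (continuous_const.mul hfc).intervalIntegrable _ _
        · exact ((hfc.comp (continuous_id.add continuous_const)).sub (continuous_const.mul hfc)).intervalIntegrable _ _
        · exact (hfc.comp (continuous_id.sub continuous_const)).intervalIntegrable _ _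
    _ = 0 := by
        rw [h1, h3, intervalIntegral.integral_const_mul]
        ring
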